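/- arXiv:2005.00837 — 3 statements merged into one kernel-verified Lean document; each statement's English description precedes it below -/
import Mathlib

section
/- For α > -1, the weight w(x) = |x|_p^α on ℚ_p is doubling in the following sense: there exists a constant C > 0 such that for every x₀ ∈ ℚ_p and every k ∈ ℤ, the w-measure of the ball x₀ + 𝔓^{k-1} is at most C times the w-measure of the ball x₀ + 𝔓^k. Moreover, one may take C = max(p^{α+1}, (p-1)p^{α+1}/(p^{α+1}-1), p). -/
/-!
In an ultrametric space every point of a ball is a centre, and for the Haar measure the ball
`‖x‖ ≤ p ^ n` is the disjoint union of `p` translates of `‖x‖ ≤ p ^ (n - 1)`, so its measure is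
`p ^ n` times that of `ℤ_[p]`. Centred at `0`, the ball splits into spheres on which `‖x‖ ^ α` is
constant; the sphere integrals form a geometric series of ratio `p ^ (-(α + 1)) < 1`, giving
`∫_{‖x‖ ≤ p ^ n} ‖x‖ ^ α = c · p ^ (n (α + 1))`. A ball missing `0` carries the constant weight
`‖x₀‖ ^ α`. Comparing `x₀ + 𝔓^(k-1)` with `x₀ + 𝔓^k` then gives the ratio `p ^ (α + 1)` when
`x₀ ∈ 𝔓^k`, `(p - 1) p ^ (α + 1) / (p ^ (α + 1) - 1)` when `‖x₀‖ = p ^ (1 - k)`, and `p` when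
`x₀ ∉ 𝔓^(k-1)`.
-/

open MeasureTheory Metric

lemma setLIntegral_sphere_norm_rpow {E : Type*} [NormedAddCommGroup E] [MeasurableSpace E]
    [OpensMeasurableSpace E] (μ : Measure E) (r α : ℝ) :
    ∫⁻ x in sphere 0 r, ENNReal.ofReal (‖x‖ ^ α) ∂μ = ENNReal.ofReal (r ^ α) * μ (sphere 0 r) := by
  rw [setLIntegral_congr_fun isClosed_sphere.measurableSet fun x hx ↦ by
      rw [mem_sphere_zero_iff_norm.mp hx], setLIntegral_const]

lemma zpow_sub_natCast_rpow {x : ℝ} (hx : 0 < x) (n : ℤ) (k : ℕ) (β : ℝ) :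
    (x ^ (n - k)) ^ β = (x ^ n) ^ β * (x ^ (-β)) ^ k := by
  rw [zpow_sub₀ hx.ne', zpow_natCast, Real.div_rpow (by positivity) (by positivity),
    Real.rpow_neg hx.le, inv_pow, ← Real.rpow_natCast_mul hx.le, mul_comm,
    Real.rpow_mul_natCast hx.le, div_eq_mul_inv]

namespace Padic

variable {p : ℕ} [hp : Fact p.Prime]

lemma one_lt_cast_p : (1 : ℝ) < p := by exact_mod_cast hp.out.one_lt

lemma ball_zpow_eq_closedBall (x : ℚ_[p]) (n : ℤ) :
    ball x ((p : ℝ) ^ n) = closedBall x ((p : ℝ) ^ (n - 1)) := by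
  ext y
  simp only [mem_ball, mem_closedBall, dist_eq_norm, norm_lt_pow_iff_norm_le_pow_sub_one]

lemma norm_natCast_sub_natCast_eq_one {i j : ℕ} (hi : i < p) (hj : j < p) (hij : i ≠ j) :
    ‖(i - j : ℚ_[p])‖ = 1 := by
  have hdvd : ¬ (p : ℤ) ∣ (i - j : ℤ) := fun h ↦
    hij (by have := Int.eq_zero_of_abs_lt_dvd h (by rw [abs_lt]; omega); omega)
  have := norm_int_le_one (p := p) (i - j)
  rw [← norm_intCast_lt_one_iff, not_lt] at hdvd
  push_cast at this hdvd
  exact le_antisymm this hdvd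

lemma norm_natCast_mul_p_zpow_le (i : ℕ) (n : ℤ) :
    ‖(i : ℚ_[p]) * (p : ℚ_[p]) ^ (-n)‖ ≤ (p : ℝ) ^ n := by
  rw [norm_mul, norm_p_zpow, neg_neg]
  exact mul_le_of_le_one_left (by positivity) (by exact_mod_cast norm_int_le_one (p := p) i)

/-- `closedBall 0 (p ^ n) = p ^ (-n) ℤ_[p]` is the union of the `p` cosets of `p ^ (1 - n) ℤ_[p]`
represented by the digits `i < p`. -/
lemma closedBall_zero_zpow_eq_biUnion (n : ℤ) :
    closedBall (0 : ℚ_[p]) ((p : ℝ) ^ n) =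
      ⋃ i ∈ Finset.range p, closedBall ((i : ℚ_[p]) * (p : ℚ_[p]) ^ (-n)) ((p : ℝ) ^ (n - 1)) := by
  have hp0 : (p : ℝ) ≠ 0 := by exact_mod_cast hp.out.ne_zero
  have hpQ : (p : ℚ_[p]) ≠ 0 := by exact_mod_cast hp.out.ne_zero
  ext x
  simp only [Set.mem_iUnion, Finset.mem_range, exists_prop]
  constructor
  · intro hx
    rw [mem_closedBall_zero_iff] at hx
    have hy : ‖x * (p : ℚ_[p]) ^ n‖ ≤ 1 := by
      rw [norm_mul, norm_p_zpow, zpow_neg, ← div_eq_mul_inv]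
      exact div_le_one_of_le₀ hx (by positivity)
    obtain ⟨z, hz⟩ : ∃ z : ℤ_[p], (z : ℚ_[p]) = x * (p : ℚ_[p]) ^ n := ⟨⟨_, hy⟩, rfl⟩
    obtain ⟨i, hip, hi⟩ := PadicInt.exists_mem_range z
    rw [IsLocalRing.mem_maximalIdeal, PadicInt.mem_nonunits, PadicInt.norm_def,
      PadicInt.coe_sub, PadicInt.coe_natCast, hz] at hi
    refine ⟨i, hip, ?_⟩
    have hdigit : ‖x * (p : ℚ_[p]) ^ n - i‖ ≤ (p : ℝ) ^ (0 - 1 : ℤ) :=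
      (norm_lt_pow_iff_norm_le_pow_sub_one _ 0).mp (by rwa [zpow_zero])
    have hx' : x - i * (p : ℚ_[p]) ^ (-n) = (x * (p : ℚ_[p]) ^ n - i) * (p : ℚ_[p]) ^ (-n) := by
      rw [sub_mul, mul_assoc, ← zpow_add₀ hpQ, add_neg_cancel, zpow_zero, mul_one]
    rw [mem_closedBall, dist_eq_norm, hx', norm_mul, norm_p_zpow, neg_neg,
      show n - 1 = (0 - 1) + n by ring, zpow_add₀ hp0]
    exact mul_le_mul_of_nonneg_right hdigit (by positivity)
  · rintro ⟨i, -, hi⟩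
    have hc : (i : ℚ_[p]) * (p : ℚ_[p]) ^ (-n) ∈ closedBall 0 ((p : ℝ) ^ n) := by
      rw [mem_closedBall_zero_iff]; exact norm_natCast_mul_p_zpow_le i n
    rw [IsUltrametricDist.closedBall_eq_of_mem hc]
    exact closedBall_subset_closedBall
      (zpow_le_zpow_right₀ one_lt_cast_p.le (by omega)) hi

lemma ofReal_zpow_eq_mul (n : ℤ) :
    ENNReal.ofReal ((p : ℝ) ^ n) = p * ENNReal.ofReal ((p : ℝ) ^ (n - 1)) := by
  have hp0 : (p : ℝ) ≠ 0 := by exact_mod_cast hp.out.ne_zero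
  rw [← ENNReal.ofReal_natCast, ← ENNReal.ofReal_mul (by positivity), ← zpow_one_add₀ hp0,
    add_sub_cancel]

lemma closedBall_zero_zpow_sdiff_zero (n : ℤ) :
    closedBall (0 : ℚ_[p]) ((p : ℝ) ^ n) \ {0} = ⋃ k : ℕ, sphere 0 ((p : ℝ) ^ (n - k)) := by
  ext x
  simp only [Set.mem_sdiff, Set.mem_singleton_iff, Set.mem_iUnion, mem_closedBall_zero_iff,
    mem_sphere_zero_iff_norm]
  constructor
  · rintro ⟨hx, hx0⟩
    rw [norm_eq_zpow_neg_valuation hx0] at hx ⊢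
    have := (zpow_le_zpow_iff_right₀ one_lt_cast_p).mp hx
    exact ⟨(n + x.valuation).toNat, by congr 1; omega⟩
  · rintro ⟨k, hx⟩
    refine ⟨hx ▸ zpow_le_zpow_right₀ one_lt_cast_p.le (by omega), fun hx0 ↦ ?_⟩
    rw [hx0, norm_zero] at hx
    exact (zpow_pos (Nat.cast_pos.mpr hp.out.pos) _).ne hx

variable [MeasurableSpace ℚ_[p]] [BorelSpace ℚ_[p]]

lemma setIntegral_closedBall_norm_rpow_of_lt_norm (ν : Measure ℚ_[p]) (α : ℝ) {x₀ : ℚ_[p]} {r : ℝ}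
    (h : r < ‖x₀‖) :
    ∫ x in closedBall x₀ r, ‖x‖ ^ α ∂ν = ‖x₀‖ ^ α * ν.real (closedBall x₀ r) := by
  rw [setIntegral_congr_fun measurableSet_closedBall fun x hx ↦ by
      rw [norm_eq_of_norm_sub_lt_right ((mem_closedBall_iff_norm.mp hx).trans_lt h)],
    setIntegral_const, smul_eq_mul, mul_comm]

variable (μ : Measure ℚ_[p]) [μ.IsAddHaarMeasure]

lemma measure_closedBall_zero_zpow_eq_mul (n : ℤ) :
    μ (closedBall 0 ((p : ℝ) ^ n)) = p * μ (closedBall 0 ((p : ℝ) ^ (n - 1))) := by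
  have hdisj : Set.PairwiseDisjoint (Finset.range p : Set ℕ) fun i : ℕ ↦
      closedBall ((i : ℚ_[p]) * (p : ℚ_[p]) ^ (-n)) ((p : ℝ) ^ (n - 1)) := by
    intro i hi j hj hij
    refine (IsUltrametricDist.closedBall_eq_or_disjoint _ _ _).resolve_left fun heq ↦ ?_
    have hmem := heq ▸ mem_closedBall_self (zpow_nonneg (Nat.cast_nonneg p) (n - 1))
    rw [mem_closedBall, dist_eq_norm, ← sub_mul, norm_mul, norm_natCast_sub_natCast_eq_one
      (Finset.mem_range.mp hi) (Finset.mem_range.mp hj) hij, one_mul, norm_p_zpow, neg_neg] at hmem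
    exact hmem.not_gt (zpow_lt_zpow_right₀ one_lt_cast_p (by omega))
  rw [closedBall_zero_zpow_eq_biUnion,
    measure_biUnion_finset hdisj fun _ _ ↦ measurableSet_closedBall]
  simp only [Measure.addHaar_closedBall_center, Finset.sum_const, Finset.card_range, nsmul_eq_mul]

lemma measure_closedBall_zpow (x : ℚ_[p]) (n : ℤ) :
    μ (closedBall x ((p : ℝ) ^ n)) = ENNReal.ofReal ((p : ℝ) ^ n) * μ (closedBall 0 1) := by
  have hp0 : (p : ENNReal) ≠ 0 := by exact_mod_cast hp.out.ne_zero
  rw [Measure.addHaar_closedBall_center]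
  induction n using Int.induction_on with
  | zero => simp
  | succ n ih =>
    rw [measure_closedBall_zero_zpow_eq_mul, add_sub_cancel_right, ih, ofReal_zpow_eq_mul (n + 1),
      add_sub_cancel_right, mul_assoc]
  | pred n ih =>
    rw [measure_closedBall_zero_zpow_eq_mul, ofReal_zpow_eq_mul, mul_assoc] at ih
    exact (ENNReal.mul_right_inj hp0 (ENNReal.natCast_ne_top p)).mp ih

lemma measure_sphere_zpow (x : ℚ_[p]) (n : ℤ) :
    μ (sphere x ((p : ℝ) ^ n)) =
      ENNReal.ofReal ((1 - (p : ℝ)⁻¹) * (p : ℝ) ^ n) * μ (closedBall 0 1) := by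
  have hp0 : (p : ℝ) ≠ 0 := by exact_mod_cast hp.out.ne_zero
  have hfin : μ (closedBall 0 1) ≠ ⊤ := measure_closedBall_lt_top.ne
  rw [← closedBall_sdiff_ball,
    measure_sdiff ball_subset_closedBall measurableSet_ball.nullMeasurableSet
      measure_ball_lt_top.ne,
    ball_zpow_eq_closedBall, measure_closedBall_zpow, measure_closedBall_zpow,
    ← ENNReal.sub_mul fun _ _ ↦ hfin, ← ENNReal.ofReal_sub _ (by positivity)]
  congr 2
  rw [zpow_sub_one₀ hp0]
  ring

lemma lintegral_closedBall_zero_zpow_norm_rpow {α : ℝ} (hα : -1 < α) (n : ℤ) :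
    ∫⁻ x in closedBall 0 ((p : ℝ) ^ n), ENNReal.ofReal (‖x‖ ^ α) ∂μ =
      ENNReal.ofReal ((1 - (p : ℝ)⁻¹) / (1 - (p : ℝ) ^ (-(α + 1))) * ((p : ℝ) ^ n) ^ (α + 1)) *
        μ (closedBall 0 1) := by
  have hp0 : (0 : ℝ) < p := by exact_mod_cast hp.out.pos
  have hr0 : 0 ≤ (p : ℝ) ^ (-(α + 1)) := by positivity
  have hr1 : (p : ℝ) ^ (-(α + 1)) < 1 :=
    Real.rpow_lt_one_of_one_lt_of_neg one_lt_cast_p (by linarith)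
  have hc : 0 ≤ (1 - (p : ℝ)⁻¹) * ((p : ℝ) ^ n) ^ (α + 1) :=
    mul_nonneg (sub_nonneg.mpr (inv_le_one_of_one_le₀ one_lt_cast_p.le)) (by positivity)
  have hdisj :
      Pairwise (Function.onFun Disjoint fun k : ℕ ↦ sphere (0 : ℚ_[p]) ((p : ℝ) ^ (n - k))) := by
    intro k l hkl
    refine Set.disjoint_left.mpr fun x hk hl ↦ hkl ?_
    rw [mem_sphere_zero_iff_norm] at hk hl
    have := zpow_right_injective₀ hp0 one_lt_cast_p.ne' (hk.symm.trans hl)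
    omega
  have hterm (k : ℕ) : ∫⁻ x in sphere 0 ((p : ℝ) ^ (n - k)), ENNReal.ofReal (‖x‖ ^ α) ∂μ =
      ENNReal.ofReal ((1 - (p : ℝ)⁻¹) * ((p : ℝ) ^ n) ^ (α + 1) * ((p : ℝ) ^ (-(α + 1))) ^ k) *
        μ (closedBall 0 1) := by
    rw [setLIntegral_sphere_norm_rpow, measure_sphere_zpow, ← mul_assoc,
      ← ENNReal.ofReal_mul (by positivity)]
    congr 2
    rw [mul_left_comm, ← Real.rpow_add_one (by positivity), zpow_sub_natCast_rpow hp0, mul_assoc]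
  rw [← Measure.restrict_congr_set (sdiff_null_ae_eq_self (measure_singleton 0)),
    closedBall_zero_zpow_sdiff_zero, lintegral_iUnion (fun _ ↦ isClosed_sphere.measurableSet) hdisj,
    tsum_congr hterm, ENNReal.tsum_mul_right,
    ← ENNReal.ofReal_tsum_of_nonneg (fun _ ↦ by positivity)
      ((summable_geometric_of_lt_one hr0 hr1).mul_left _),
    tsum_mul_left, tsum_geometric_of_lt_one hr0 hr1]
  congr 2
  ring

lemma setIntegral_closedBall_zero_zpow_norm_rpow {α : ℝ} (hα : -1 < α) (n : ℤ) :
    ∫ x in closedBall 0 ((p : ℝ) ^ n), ‖x‖ ^ α ∂μ =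
      (1 - (p : ℝ)⁻¹) / (1 - (p : ℝ) ^ (-(α + 1))) * ((p : ℝ) ^ n) ^ (α + 1) *
        μ.real (closedBall 0 1) := by
  have hc : 0 ≤ (1 - (p : ℝ)⁻¹) / (1 - (p : ℝ) ^ (-(α + 1))) * ((p : ℝ) ^ n) ^ (α + 1) := by
    refine mul_nonneg (div_nonneg ?_ ?_) (by positivity)
    · exact sub_nonneg.mpr (inv_le_one_of_one_le₀ one_lt_cast_p.le)
    · exact sub_nonneg.mpr (Real.rpow_le_one_of_one_le_of_nonpos one_lt_cast_p.le (by linarith))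
  rw [integral_eq_lintegral_of_nonneg_ae (.of_forall fun _ ↦ by positivity)
      (measurable_norm.pow_const α).aestronglyMeasurable,
    lintegral_closedBall_zero_zpow_norm_rpow μ hα, ENNReal.toReal_mul, ENNReal.toReal_ofReal hc,
    measureReal_def]

lemma measureReal_closedBall_zpow (x : ℚ_[p]) (n : ℤ) :
    μ.real (closedBall x ((p : ℝ) ^ n)) = (p : ℝ) ^ n * μ.real (closedBall 0 1) := by
  rw [measureReal_def, measure_closedBall_zpow, ENNReal.toReal_mul,
    ENNReal.toReal_ofReal (by positivity), measureReal_def]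

variable {μ} {α : ℝ} {x₀ : ℚ_[p]} {n : ℤ}

lemma setIntegral_closedBall_zpow_add_one_of_norm_le (hα : -1 < α) (h : ‖x₀‖ ≤ (p : ℝ) ^ n) :
    ∫ x in closedBall x₀ ((p : ℝ) ^ (n + 1)), ‖x‖ ^ α ∂μ =
      (p : ℝ) ^ (α + 1) * ∫ x in closedBall x₀ ((p : ℝ) ^ n), ‖x‖ ^ α ∂μ := by
  have hp0 : (0 : ℝ) < p := by exact_mod_cast hp.out.pos
  have h' : ‖x₀‖ ≤ (p : ℝ) ^ (n + 1) :=
    h.trans (zpow_le_zpow_right₀ one_lt_cast_p.le (by omega))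
  rw [← IsUltrametricDist.closedBall_eq_of_mem (mem_closedBall_zero_iff.mpr h),
    ← IsUltrametricDist.closedBall_eq_of_mem (mem_closedBall_zero_iff.mpr h'),
    setIntegral_closedBall_zero_zpow_norm_rpow μ hα,
    setIntegral_closedBall_zero_zpow_norm_rpow μ hα,
    zpow_add_one₀ hp0.ne', Real.mul_rpow (by positivity) hp0.le]
  ring

lemma setIntegral_closedBall_zpow_add_one_of_norm_eq (hα : -1 < α) (h : ‖x₀‖ = (p : ℝ) ^ (n + 1)) :
    ∫ x in closedBall x₀ ((p : ℝ) ^ (n + 1)), ‖x‖ ^ α ∂μ =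
      ((p : ℝ) - 1) * (p : ℝ) ^ (α + 1) / ((p : ℝ) ^ (α + 1) - 1) *
        ∫ x in closedBall x₀ ((p : ℝ) ^ n), ‖x‖ ^ α ∂μ := by
  have hp0 : (0 : ℝ) < p := by exact_mod_cast hp.out.pos
  have hpα : 1 < (p : ℝ) ^ (α + 1) := Real.one_lt_rpow one_lt_cast_p (by linarith)
  rw [← IsUltrametricDist.closedBall_eq_of_mem (mem_closedBall_zero_iff.mpr h.le),
    setIntegral_closedBall_zero_zpow_norm_rpow μ hα,
    setIntegral_closedBall_norm_rpow_of_lt_norm μ α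
      (h ▸ zpow_lt_zpow_right₀ one_lt_cast_p (by omega)),
    measureReal_closedBall_zpow, h, Real.rpow_add_one (by positivity), zpow_add_one₀ hp0.ne',
    Real.rpow_neg hp0.le]
  field_simp

lemma setIntegral_closedBall_zpow_add_one_of_lt_norm (h : (p : ℝ) ^ (n + 1) < ‖x₀‖) :
    ∫ x in closedBall x₀ ((p : ℝ) ^ (n + 1)), ‖x‖ ^ α ∂μ =
      (p : ℝ) * ∫ x in closedBall x₀ ((p : ℝ) ^ n), ‖x‖ ^ α ∂μ := by
  have hp0 : (p : ℝ) ≠ 0 := by exact_mod_cast hp.out.ne_zero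
  rw [setIntegral_closedBall_norm_rpow_of_lt_norm μ α h,
    setIntegral_closedBall_norm_rpow_of_lt_norm μ α
      ((zpow_lt_zpow_right₀ one_lt_cast_p (by omega)).trans h),
    measureReal_closedBall_zpow, measureReal_closedBall_zpow, zpow_add_one₀ hp0]
  ring

end Padic

open Padic in
theorem stmt_5_general (p : ℕ) [Fact p.Prime]
    [MeasurableSpace ℚ_[p]] [BorelSpace ℚ_[p]]
    (μ : Measure ℚ_[p]) [μ.IsAddHaarMeasure]
    (α : ℝ) (hα : -1 < α) (x₀ : ℚ_[p]) (k : ℤ) :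
    ∫ x in {x : ℚ_[p] | ‖x - x₀‖ ≤ (p : ℝ) ^ (-(k - 1))}, ‖x‖ ^ α ∂μ ≤
      max ((p : ℝ) ^ (α + 1))
        (max (((p : ℝ) - 1) * (p : ℝ) ^ (α + 1) / ((p : ℝ) ^ (α + 1) - 1)) (p : ℝ)) *
      ∫ x in {x : ℚ_[p] | ‖x - x₀‖ ≤ (p : ℝ) ^ (-k)}, ‖x‖ ^ α ∂μ := by
  have hball (r : ℝ) : {x : ℚ_[p] | ‖x - x₀‖ ≤ r} = closedBall x₀ r := by
    ext; rw [mem_closedBall, dist_eq_norm]; rfl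
  rw [hball, hball, show -(k - 1) = -k + 1 by ring]
  have hI : 0 ≤ ∫ x in closedBall x₀ ((p : ℝ) ^ (-k)), ‖x‖ ^ α ∂μ :=
    setIntegral_nonneg measurableSet_closedBall fun _ _ ↦ by positivity
  rcases le_or_gt ‖x₀‖ ((p : ℝ) ^ (-k)) with h | h
  · rw [setIntegral_closedBall_zpow_add_one_of_norm_le hα h]
    gcongr
    exact le_max_left _ _
  rcases le_or_gt ‖x₀‖ ((p : ℝ) ^ (-k + 1)) with h' | h'
  · have heq : ‖x₀‖ = (p : ℝ) ^ (-k + 1) :=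
      h'.antisymm (not_lt.mp ((norm_le_pow_iff_norm_lt_pow_add_one x₀ _).not.mp h.not_ge))
    rw [setIntegral_closedBall_zpow_add_one_of_norm_eq hα heq]
    gcongr
    exact (le_max_left _ _).trans (le_max_right _ _)
  · rw [setIntegral_closedBall_zpow_add_one_of_lt_norm h']
    gcongr
    exact (le_max_right _ _).trans (le_max_right _ _)

/-- For `α > -1`, the weight `w(x) = |x|_p^α` on `ℚ_p` is doubling: for every
`x₀ ∈ ℚ_p` and `k ∈ ℤ`, the `w`-measure of `x₀ + 𝔓^{k-1}` is at most
`C = max(p^{α+1}, (p-1)p^{α+1}/(p^{α+1}-1), p)` times the `w`-measure of `x₀ + 𝔓^k`. -/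
theorem stmt_5 (p : ℕ) [Fact p.Prime]
    [MeasurableSpace ℚ_[p]] [BorelSpace ℚ_[p]]
    (μ : Measure ℚ_[p]) [μ.IsAddHaarMeasure]
    (hμ : μ (Metric.closedBall 0 1) = 1)
    (α : ℝ) (hα : -1 < α) (x₀ : ℚ_[p]) (k : ℤ) :
    ∫ x in {x : ℚ_[p] | ‖x - x₀‖ ≤ (p : ℝ) ^ (-(k - 1))}, ‖x‖ ^ α ∂μ ≤
      max ((p : ℝ) ^ (α + 1))
        (max (((p : ℝ) - 1) * (p : ℝ) ^ (α + 1) / ((p : ℝ) ^ (α + 1) - 1)) (p : ℝ)) *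
      ∫ x in {x : ℚ_[p] | ‖x - x₀‖ ≤ (p : ℝ) ^ (-k)}, ‖x‖ ^ α ∂μ :=
  stmt_5_general p μ α hα x₀ k
end

section
/- Let φ ∈ L^1(ℚ_p) be a compactly supported integrable simple function (finite linear combination of indicator functions of balls) such that φ(x + y) = φ(x) whenever |y|_p < |x|_p. Then its Fourier transform satisfies φ̂(x + y) = φ̂(x) whenever |y|_p < |x|_p. -/
/-!
Put `a = 1 + y / x`, so that `x * a = x + y` and `‖a - 1‖ < 1`. The hypothesis on `φ` makes it
invariant under the dilation `t ↦ a * t`, and since `‖a‖ = 1` this dilation maps the unit ball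
onto itself, hence preserves Haar measure. Substituting `t ↦ a * t` in the integral defining
`φ̂ (x + y)` therefore gives `φ̂ x`.
-/

open MeasureTheory

section HaarChar

variable {G : Type*} [AddGroup G] [TopologicalSpace G] [MeasurableSpace G] [BorelSpace G]
  [IsTopologicalAddGroup G] [LocallyCompactSpace G]

theorem ContinuousAddEquiv.measurePreserving_of_measure_preimage_eq (μ : Measure G)
    [μ.IsAddHaarMeasure] [μ.Regular] (φ : G ≃ₜ+ G) {K : Set G} (hK₀ : μ K ≠ 0) (hK : μ K ≠ ⊤)
    (hφK : μ (φ ⁻¹' K) = μ K) : MeasurePreserving φ μ μ := by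
  have hchar : addEquivAddHaarChar φ = 1 := by
    have h := addEquivAddHaarChar_smul_preimage μ (X := K) φ
    rw [hφK, ENNReal.smul_def, smul_eq_mul] at h
    exact_mod_cast (ENNReal.mul_eq_right hK₀ hK).mp h
  refine ⟨φ.continuous.measurable, ?_⟩
  simpa [hchar] using addEquivAddHaarChar_smul_map μ φ

end HaarChar

section NormedField

variable {𝕜 : Type*} [NormedField 𝕜]

theorem MeasureTheory.Measure.integral_comp_mul_left_of_norm_eq_one [ProperSpace 𝕜]
    [MeasurableSpace 𝕜] [BorelSpace 𝕜] {E : Type*} [NormedAddCommGroup E] [NormedSpace ℝ E]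
    (μ : Measure 𝕜) [μ.IsAddHaarMeasure] {a : 𝕜} (ha : ‖a‖ = 1) (f : 𝕜 → E) :
    ∫ t, f (a * t) ∂μ = ∫ t, f t ∂μ := by
  have ha₀ : a ≠ 0 := norm_ne_zero_iff.mp (by simp [ha])
  let u : 𝕜ˣ := Units.mk0 a ha₀
  have hball :
      (ContinuousAddEquiv.mulLeft u) ⁻¹' Metric.closedBall 0 1 = Metric.closedBall 0 1 := by
    ext t
    simp [u, norm_mul, ha]
  have hmp := (ContinuousAddEquiv.mulLeft u).measurePreserving_of_measure_preimage_eq μ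
    (Metric.measure_closedBall_pos μ 0 one_pos).ne' (isCompact_closedBall 0 1).measure_ne_top
    (by rw [hball])
  exact hmp.integral_comp (Homeomorph.mulLeft₀ a ha₀).measurableEmbedding f

theorem apply_mul_eq_self_of_norm_sub_one_lt {E : Type*} {φ : 𝕜 → E}
    (hφ : ∀ x y : 𝕜, ‖y‖ < ‖x‖ → φ (x + y) = φ x) {a : 𝕜} (ha : ‖a - 1‖ < 1) (t : 𝕜) :
    φ (a * t) = φ t := by
  rcases eq_or_ne t 0 with rfl | ht
  · simp
  have hlt : ‖(a - 1) * t‖ < ‖t‖ := by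
    rw [norm_mul]
    exact mul_lt_of_lt_one_left (norm_pos_iff.mpr ht) ha
  simpa [sub_mul] using hφ t ((a - 1) * t) hlt

theorem norm_eq_one_of_norm_sub_one_lt [IsUltrametricDist 𝕜] {a : 𝕜} (ha : ‖a - 1‖ < 1) :
    ‖a‖ = 1 := by
  have h := IsUltrametricDist.norm_add_eq_max_of_norm_ne_norm (x := a - 1) (y := 1)
    (by simpa using ha.ne)
  simpa [max_eq_right ha.le] using h

end NormedField

theorem stmt_9_general (p : ℕ) [Fact p.Prime]
    [MeasurableSpace ℚ_[p]] [BorelSpace ℚ_[p]]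
    (μ : Measure ℚ_[p]) [μ.IsAddHaarMeasure]
    (χ : ℚ_[p] → ℂ)
    (φ : ℚ_[p] → ℂ)
    (hconst : ∀ x y : ℚ_[p], ‖y‖ < ‖x‖ → φ (x + y) = φ x) :
    ∀ x y : ℚ_[p], ‖y‖ < ‖x‖ →
      (∫ t, φ t * (starRingEnd ℂ) (χ ((x + y) * t)) ∂μ)
        = ∫ t, φ t * (starRingEnd ℂ) (χ (x * t)) ∂μ := by
  intro x y hxy
  have hx : x ≠ 0 := norm_pos_iff.mp ((norm_nonneg y).trans_lt hxy)
  set a : ℚ_[p] := 1 + y / x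
  have ha : ‖a - 1‖ < 1 := by
    rw [add_sub_cancel_left, norm_div]
    exact (div_lt_one (norm_pos_iff.mpr hx)).mpr hxy
  have hxa : x * a = x + y := by rw [mul_add, mul_one, mul_div_cancel₀ y hx]
  calc (∫ t, φ t * (starRingEnd ℂ) (χ ((x + y) * t)) ∂μ)
      = ∫ t, φ (a * t) * (starRingEnd ℂ) (χ (x * (a * t))) ∂μ := by
        simp_rw [apply_mul_eq_self_of_norm_sub_one_lt hconst ha, ← mul_assoc, hxa]
    _ = ∫ t, φ t * (starRingEnd ℂ) (χ (x * t)) ∂μ :=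
        Measure.integral_comp_mul_left_of_norm_eq_one μ (norm_eq_one_of_norm_sub_one_lt ha)
          (fun t => φ t * (starRingEnd ℂ) (χ (x * t)))

/-- Let `φ ∈ L¹(ℚ_p)` be a compactly supported integrable simple function (a finite
linear combination of indicator functions of balls) such that `φ(x+y) = φ(x)` whenever
`|y|_p < |x|_p`. Then its Fourier transform `φ̂(u) = ∫ φ(x) χ(ux)‾ dx` satisfies
`φ̂(x+y) = φ̂(x)` whenever `|y|_p < |x|_p`. -/
theorem stmt_9 (p : ℕ) [Fact p.Prime]
    [MeasurableSpace ℚ_[p]] [BorelSpace ℚ_[p]]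
    (μ : Measure ℚ_[p]) [μ.IsAddHaarMeasure]
    (hμ : μ (Metric.closedBall 0 1) = 1)
    (χ : ℚ_[p] → ℂ)
    (hχadd : ∀ x y, χ (x + y) = χ x * χ y)
    (hχtriv : ∀ x : ℚ_[p], ‖x‖ ≤ 1 → χ x = 1)
    (hχnontriv : ∃ x : ℚ_[p], ‖x‖ ≤ (p : ℝ) ∧ χ x ≠ 1)
    (φ : ℚ_[p] → ℂ) (hφint : Integrable φ μ)
    (hsimple : ∃ (n : ℕ) (c : Fin n → ℂ) (z : Fin n → ℚ_[p]) (m : Fin n → ℤ),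
        ∀ x, φ x = ∑ i, c i * (if ‖x - z i‖ ≤ (p : ℝ) ^ (m i) then 1 else 0))
    (hconst : ∀ x y : ℚ_[p], ‖y‖ < ‖x‖ → φ (x + y) = φ x) :
    ∀ x y : ℚ_[p], ‖y‖ < ‖x‖ →
      (∫ t, φ t * (starRingEnd ℂ) (χ ((x + y) * t)) ∂μ)
        = ∫ t, φ t * (starRingEnd ℂ) (χ (x * t)) ∂μ :=
  stmt_9_general p μ χ φ hconst
end

section
/- Let Ω ⊆ ℚ_p be a Borel set of positive finite Haar measure, S ⊆ ℚ_p a set such that {χ_s|_Ω : s ∈ S} is an orthonormal basis of L²(Ω), and φ ∈ L²(ℚ_p) with φ̂ supported in Ω and |φ̂| = 1 a.e. on Ω. Then {φ(· - s) : s ∈ S} is an orthonormal basis of the closed linear span V of {φ(· - s) : s ∈ S} in L²(ℚ_p). -/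
/-!
Orthonormality is transported to the Fourier side: by Plancherel and the translation rule,
`⟨φ(· - s), φ(· - t)⟩ = ∫ χ_t · χ̄_s · |φ̂|²`, and `|φ̂|² = 1_Ω` a.e., so the inner products
of the translates are those of the exponentials `χ_s|_Ω` in `L²(Ω)`. Completeness in `V`
holds in any Hilbert space: an element of the closed span of a family that is orthogonal to
the family is orthogonal to itself.
-/

open MeasureTheory
open scoped Classical ComplexConjugate

section L2

variable {α : Type*} [MeasurableSpace α] {μ : Measure α} {f g : α → ℂ}

theorem MeasureTheory.MemLp.integral_mul_conj_eq_inner (hf : MemLp f 2 μ) (hg : MemLp g 2 μ) :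
    ∫ x, f x * conj (g x) ∂μ = inner ℂ (hg.toLp g) (hf.toLp f) := by
  rw [L2.inner_def]
  refine integral_congr_ae ?_
  filter_upwards [hf.coeFn_toLp, hg.coeFn_toLp] with x hfx hgx
  rw [hfx, hgx, RCLike.inner_apply, mul_comm]

theorem MeasureTheory.MemLp.integrable_mul_conj (hf : MemLp f 2 μ) (hg : MemLp g 2 μ) :
    Integrable (fun x => f x * conj (g x)) μ := by
  refine (integrable_congr ?_).mp (L2.integrable_inner (𝕜 := ℂ) (hg.toLp g) (hf.toLp f))
  filter_upwards [hf.coeFn_toLp, hg.coeFn_toLp] with x hfx hgx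
  rw [hfx, hgx, RCLike.inner_apply, mul_comm]

theorem MeasureTheory.MemLp.norm_toLp_sq (hf : MemLp f 2 μ) :
    ‖hf.toLp f‖ ^ 2 = ∫ x, ‖f x‖ ^ 2 ∂μ := by
  have h : inner ℂ (hf.toLp f) (hf.toLp f) = ((∫ x, ‖f x‖ ^ 2 ∂μ : ℝ) : ℂ) := by
    rw [← hf.integral_mul_conj_eq_inner hf, ← integral_complex_ofReal]
    simp only [Complex.mul_conj', Complex.ofReal_pow]
  rw [norm_sq_eq_re_inner (𝕜 := ℂ), h]
  exact Complex.ofReal_re _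

theorem MeasureTheory.MemLp.ae_eq_zero_of_approx_by_orthogonal (hf : MemLp f 2 μ)
    (h : ∀ ε > 0, ∃ g, MemLp g 2 μ ∧ ∫ x, f x * conj (g x) ∂μ = 0 ∧
      ∫ x, ‖f x - g x‖ ^ 2 ∂μ < ε) :
    f =ᵐ[μ] 0 := by
  let F := hf.toLp f
  have hclosed : IsClosed {G : α →₂[μ] ℂ | inner ℂ G F = 0} :=
    isClosed_eq (continuous_id.inner continuous_const) continuous_const
  have hF : F ∈ closure {G : α →₂[μ] ℂ | inner ℂ G F = 0} := by
    refine Metric.mem_closure_iff.2 fun ε hε => ?_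
    obtain ⟨g, hg, horth, hclose⟩ := h (ε ^ 2) (by positivity)
    refine ⟨hg.toLp g, (hf.integral_mul_conj_eq_inner hg).symm.trans horth, ?_⟩
    rw [dist_eq_norm, ← hf.toLp_sub hg, ← sq_lt_sq₀ (norm_nonneg _) hε.le,
      (hf.sub hg).norm_toLp_sq]
    exact hclose
  have hF0 : F = 0 := inner_self_eq_zero.1 (hclosed.closure_subset hF)
  calc f =ᵐ[μ] F := hf.coeFn_toLp.symm
    _ = ⇑(0 : α →₂[μ] ℂ) := by rw [hF0]
    _ =ᵐ[μ] 0 := Lp.coeFn_zero ℂ 2 μ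

theorem MeasureTheory.MemLp.integral_mul_conj_finsetSum {ι : Type*} (s : Finset ι) (c : ι → ℂ)
    {ψ : ι → α → ℂ} (hf : MemLp f 2 μ) (hψ : ∀ i ∈ s, MemLp (ψ i) 2 μ) :
    ∫ x, f x * conj (∑ i ∈ s, c i * ψ i x) ∂μ
      = ∑ i ∈ s, conj (c i) * ∫ x, f x * conj (ψ i x) ∂μ := by
  simp_rw [map_sum, map_mul, Finset.mul_sum, mul_left_comm (f _)]
  rw [integral_finsetSum s fun i hi => (hf.integrable_mul_conj (hψ i hi)).const_mul _]
  simp_rw [integral_const_mul]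

end L2

section Translates

variable {K : Type*} [Ring K] [MeasurableSpace K] {μ : Measure K}
  {χ : K → ℂ} {F : (K → ℂ) → K → ℂ} {φ : K → ℂ} {Ω : Set K}

theorem MeasureTheory.MemLp.comp_sub_right [MeasurableAdd K] [μ.IsAddRightInvariant]
    (hφ : MemLp φ 2 μ) (s : K) : MemLp (fun x => φ (x - s)) 2 μ :=
  hφ.comp_measurePreserving (measurePreserving_sub_right μ s)

theorem ae_fourier_translate_mul_conj_fourier_translate
    (hF : ∀ s, ∀ᵐ ξ ∂μ, F (fun x => φ (x - s)) ξ = conj (χ (s * ξ)) * F φ ξ)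
    (hsupp : ∀ᵐ ξ ∂μ, ξ ∉ Ω → F φ ξ = 0) (hmod : ∀ᵐ ξ ∂μ, ξ ∈ Ω → ‖F φ ξ‖ = 1) (s t : K) :
    ∀ᵐ ξ ∂μ, F (fun x => φ (x - s)) ξ * conj (F (fun x => φ (x - t)) ξ)
      = Ω.indicator (fun ξ => χ (t * ξ) * conj (χ (s * ξ))) ξ := by
  filter_upwards [hF s, hF t, hsupp, hmod] with ξ hs ht hξsupp hξmod
  rw [hs, ht]
  by_cases hξ : ξ ∈ Ω
  · have hφξ : F φ ξ * conj (F φ ξ) = 1 := by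
      rw [Complex.mul_conj', hξmod hξ, Complex.ofReal_one, one_pow]
    rw [Set.indicator_of_mem hξ, map_mul, Complex.conj_conj]
    linear_combination (χ (t * ξ) * conj (χ (s * ξ))) * hφξ
  · rw [Set.indicator_of_notMem hξ, hξsupp hξ]
    simp only [mul_zero, zero_mul]

theorem integral_translate_mul_conj_translate [MeasurableAdd K] [μ.IsAddRightInvariant]
    (hΩ : MeasurableSet Ω) (hφ : MemLp φ 2 μ)
    (hplancherel : ∀ f g : K → ℂ, MemLp f 2 μ → MemLp g 2 μ →
      ∫ x, f x * conj (g x) ∂μ = ∫ ξ, F f ξ * conj (F g ξ) ∂μ)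
    (hF : ∀ s, ∀ᵐ ξ ∂μ, F (fun x => φ (x - s)) ξ = conj (χ (s * ξ)) * F φ ξ)
    (hsupp : ∀ᵐ ξ ∂μ, ξ ∉ Ω → F φ ξ = 0) (hmod : ∀ᵐ ξ ∂μ, ξ ∈ Ω → ‖F φ ξ‖ = 1) (s t : K) :
    ∫ x, φ (x - s) * conj (φ (x - t)) ∂μ = ∫ ξ in Ω, χ (t * ξ) * conj (χ (s * ξ)) ∂μ := by
  rw [hplancherel _ _ (hφ.comp_sub_right s) (hφ.comp_sub_right t), ← integral_indicator hΩ]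
  exact integral_congr_ae (ae_fourier_translate_mul_conj_fourier_translate hF hsupp hmod s t)

end Translates

theorem stmt_19_general (p : ℕ) [Fact p.Prime]
    [MeasurableSpace ℚ_[p]] [BorelSpace ℚ_[p]]
    (μ : Measure ℚ_[p]) [μ.IsAddHaarMeasure]
    (χ : ℚ_[p] → ℂ)
    (Ω : Set ℚ_[p]) (hΩmeas : MeasurableSet Ω)
    (S : Set ℚ_[p])
    -- {χ_s|_Ω : s ∈ S} is orthonormal in L²(Ω)
    (hSon : ∀ s ∈ S, ∀ t ∈ S,
        ∫ x in Ω, χ (s * x) * (starRingEnd ℂ) (χ (t * x)) ∂μ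
          = if s = t then 1 else 0)
    -- the Fourier transform: an L² "isometry" (Plancherel) intertwining translations
    (F : (ℚ_[p] → ℂ) → (ℚ_[p] → ℂ))
    (hFplancherel : ∀ f g : ℚ_[p] → ℂ, MemLp f 2 μ → MemLp g 2 μ →
        ∫ x, f x * (starRingEnd ℂ) (g x) ∂μ
          = ∫ ξ, F f ξ * (starRingEnd ℂ) (F g ξ) ∂μ)
    (hFtranslate : ∀ (f : ℚ_[p] → ℂ) (s : ℚ_[p]), MemLp f 2 μ →
        ∀ᵐ ξ ∂μ, F (fun x => f (x - s)) ξ = (starRingEnd ℂ) (χ (s * ξ)) * F f ξ)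
    (φ : ℚ_[p] → ℂ) (hφ : MemLp φ 2 μ)
    (hφsupp : ∀ᵐ ξ ∂μ, ξ ∉ Ω → F φ ξ = 0)
    (hφmod : ∀ᵐ ξ ∂μ, ξ ∈ Ω → ‖F φ ξ‖ = 1) :
    -- orthonormality of the translates
    (∀ s ∈ S, ∀ t ∈ S,
        ∫ x, φ (x - s) * (starRingEnd ℂ) (φ (x - t)) ∂μ
          = if s = t then 1 else 0) ∧
    -- completeness in V = closed span of the translates
    (∀ f : ℚ_[p] → ℂ, MemLp f 2 μ →
        (∀ ε : ℝ, 0 < ε → ∃ (n : ℕ) (c : Fin n → ℂ) (σ : Fin n → ℚ_[p]),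
          (∀ i, σ i ∈ S) ∧
          (∫ x, ‖f x - ∑ i, c i * φ (x - σ i)‖ ^ 2 ∂μ) < ε) →
        (∀ s ∈ S, ∫ x, f x * (starRingEnd ℂ) (φ (x - s)) ∂μ = 0) →
        ∀ᵐ x ∂μ, f x = 0) := by
  refine ⟨fun s hs t ht => ?_, fun f hf happrox horth => ?_⟩
  · rw [integral_translate_mul_conj_translate hΩmeas hφ hFplancherel
      (fun s => hFtranslate φ s hφ) hφsupp hφmod s t, hSon t ht s hs]
    exact if_congr eq_comm rfl rfl
  · refine hf.ae_eq_zero_of_approx_by_orthogonal fun ε hε => ?_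
    obtain ⟨n, c, σ, hσ, happ⟩ := happrox ε hε
    refine ⟨_, memLp_finsetSum _ fun i _ => (hφ.comp_sub_right (σ i)).const_mul (c i), ?_, happ⟩
    rw [hf.integral_mul_conj_finsetSum _ c fun i _ => hφ.comp_sub_right (σ i)]
    exact Finset.sum_eq_zero fun i _ => by rw [horth _ (hσ i), mul_zero]

/-- Let `Ω ⊆ ℚ_p` be Borel with `0 < μ(Ω) < ∞`, let `S ⊆ ℚ_p` be such that
`{χ_s|_Ω : s ∈ S}` is an orthonormal basis of `L²(Ω)`, and let `φ ∈ L²(ℚ_p)` with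
`φ̂` supported in `Ω` and `|φ̂| = 1` a.e. on `Ω` (here `F` is the Fourier transform,
an `L²` isometry with `F(φ(· - s)) = χ_s‾ · Fφ`). Then `{φ(· - s) : s ∈ S}` is an
orthonormal basis of the closed linear span `V` of `{φ(· - s) : s ∈ S}` in `L²(ℚ_p)`:
it is orthonormal, and any element of `V` orthogonal to every `φ(· - s)` vanishes a.e. -/
theorem stmt_19 (p : ℕ) [Fact p.Prime]
    [MeasurableSpace ℚ_[p]] [BorelSpace ℚ_[p]]
    (μ : Measure ℚ_[p]) [μ.IsAddHaarMeasure]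
    (hμ : μ (Metric.closedBall 0 1) = 1)
    (χ : ℚ_[p] → ℂ)
    (hχadd : ∀ x y, χ (x + y) = χ x * χ y)
    (hχtriv : ∀ x : ℚ_[p], ‖x‖ ≤ 1 → χ x = 1)
    (hχnontriv : ∃ x : ℚ_[p], ‖x‖ ≤ (p : ℝ) ∧ χ x ≠ 1)
    (Ω : Set ℚ_[p]) (hΩmeas : MeasurableSet Ω)
    (hΩpos : 0 < μ Ω) (hΩfin : μ Ω < ⊤)
    (S : Set ℚ_[p])
    -- {χ_s|_Ω : s ∈ S} is orthonormal in L²(Ω)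
    (hSon : ∀ s ∈ S, ∀ t ∈ S,
        ∫ x in Ω, χ (s * x) * (starRingEnd ℂ) (χ (t * x)) ∂μ
          = if s = t then 1 else 0)
    -- and complete in L²(Ω)
    (hScomplete : ∀ g : ℚ_[p] → ℂ, MemLp g 2 (μ.restrict Ω) →
        (∀ s ∈ S, ∫ x in Ω, g x * (starRingEnd ℂ) (χ (s * x)) ∂μ = 0) →
        ∀ᵐ x ∂μ.restrict Ω, g x = 0)
    -- the Fourier transform: an L² "isometry" (Plancherel) intertwining translations
    (F : (ℚ_[p] → ℂ) → (ℚ_[p] → ℂ))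
    (hFplancherel : ∀ f g : ℚ_[p] → ℂ, MemLp f 2 μ → MemLp g 2 μ →
        ∫ x, f x * (starRingEnd ℂ) (g x) ∂μ
          = ∫ ξ, F f ξ * (starRingEnd ℂ) (F g ξ) ∂μ)
    (hFtranslate : ∀ (f : ℚ_[p] → ℂ) (s : ℚ_[p]), MemLp f 2 μ →
        ∀ᵐ ξ ∂μ, F (fun x => f (x - s)) ξ = (starRingEnd ℂ) (χ (s * ξ)) * F f ξ)
    (φ : ℚ_[p] → ℂ) (hφ : MemLp φ 2 μ)
    (hφsupp : ∀ᵐ ξ ∂μ, ξ ∉ Ω → F φ ξ = 0)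
    (hφmod : ∀ᵐ ξ ∂μ, ξ ∈ Ω → ‖F φ ξ‖ = 1) :
    -- orthonormality of the translates
    (∀ s ∈ S, ∀ t ∈ S,
        ∫ x, φ (x - s) * (starRingEnd ℂ) (φ (x - t)) ∂μ
          = if s = t then 1 else 0) ∧
    -- completeness in V = closed span of the translates
    (∀ f : ℚ_[p] → ℂ, MemLp f 2 μ →
        (∀ ε : ℝ, 0 < ε → ∃ (n : ℕ) (c : Fin n → ℂ) (σ : Fin n → ℚ_[p]),
          (∀ i, σ i ∈ S) ∧
          (∫ x, ‖f x - ∑ i, c i * φ (x - σ i)‖ ^ 2 ∂μ) < ε) →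
        (∀ s ∈ S, ∫ x, f x * (starRingEnd ℂ) (φ (x - s)) ∂μ = 0) →
        ∀ᵐ x ∂μ, f x = 0) :=
  stmt_19_general p μ χ Ω hΩmeas S hSon F hFplancherel hFtranslate φ hφ hφsupp hφmod
end
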